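/- For goals built from conj, disj, ==, =/=, and fresh (with no factor and no relation calls), the denoted weight under any environment is either 0 or 1, provided the semiring has idempotent addition. -/
import Mathlib

inductive PTy : Type
  | unit : PTy
  | sum : PTy → PTy → PTy
  | prod : PTy → PTy → PTy
  | var : ℕ → PTy
deriving DecidableEq

def psubst (σ : ℕ → PTy) : PTy → PTy
  | .unit => .unit
  | .sum a b => .sum (psubst σ a) (psubst σ b)
  | .prod a b => .prod (psubst σ a) (psubst σ b)
  | .var n => σ n

inductive Val : Type
  | sole : Val
  | vleft : Val → Val
  | vright : Val → Val
  | vpair : Val → Val → Val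
deriving DecidableEq

inductive HasTy : Val → PTy → Prop
  | sole : HasTy .sole .unit
  | vleft {v a b} : HasTy v a → HasTy (.vleft v) (.sum a b)
  | vright {v a b} : HasTy v b → HasTy (.vright v) (.sum a b)
  | vpair {v w a b} : HasTy v a → HasTy w b → HasTy (.vpair v w) (.prod a b)

def Mono : PTy → Prop
  | .unit => True
  | .sum a b => Mono a ∧ Mono b
  | .prod a b => Mono a ∧ Mono b
  | .var _ => False

inductive Shell : Type
  | sole : Shell
  | sleft : Shell → Shell
  | sright : Shell → Shell
  | spair : Shell → Shell → Shell
  | hole : ℕ → Shell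
deriving DecidableEq

def shell : PTy → Val → Shell
  | .var n, _ => .hole n
  | .sum a _, .vleft v => .sleft (shell a v)
  | .sum _ b, .vright v => .sright (shell b v)
  | .prod a b, .vpair v w => .spair (shell a v) (shell b w)
  | _, _ => .sole

def holes (α : ℕ) : PTy → Val → List Val
  | .var n, v => if n = α then [v] else []
  | .sum a _, .vleft v => holes α a v
  | .sum _ b, .vright v => holes α b v
  | .prod a b, .vpair v w => holes α a v ++ holes α b w
  | _, _ => []

def envshell (Δ : List PTy) (δ : List Val) : List Shell :=
  List.zipWith shell Δ δ

def envholes (α : ℕ) (Δ : List PTy) (δ : List Val) : List Val :=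
  (List.zipWith (holes α) Δ δ).flatten

def EqPat (Δ : List PTy) (δ₁ δ₂ : List Val) : Prop :=
  envshell Δ δ₁ = envshell Δ δ₂ ∧
  ∀ (α : ℕ) (i j : ℕ) (h₁ k₁ h₂ k₂ : Val),
    (envholes α Δ δ₁)[i]? = some h₁ → (envholes α Δ δ₁)[j]? = some k₁ →
    (envholes α Δ δ₂)[i]? = some h₂ → (envholes α Δ δ₂)[j]? = some k₂ →
    (h₁ = k₁ ↔ h₂ = k₂)

def EnvTy (σ : ℕ → PTy) (Δ : List PTy) (δ : List Val) : Prop :=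
  List.Forall₂ (fun τ v => HasTy v (psubst σ τ)) Δ δ

inductive Term : Type
  | sole : Term
  | tleft : Term → Term
  | tright : Term → Term
  | tpair : Term → Term → Term
  | var : ℕ → Term
deriving DecidableEq

def denT : Term → List Val → Val
  | .sole, _ => .sole
  | .tleft t, δ => .vleft (denT t δ)
  | .tright t, δ => .vright (denT t δ)
  | .tpair s t, δ => .vpair (denT s δ) (denT t δ)
  | .var n, δ => δ.getD n .sole

inductive TmTy : List PTy → Term → PTy → Prop
  | sole {Δ} : TmTy Δ .sole .unit
  | tleft {Δ t a b} : TmTy Δ t a → TmTy Δ (.tleft t) (.sum a b)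
  | tright {Δ t a b} : TmTy Δ t b → TmTy Δ (.tright t) (.sum a b)
  | tpair {Δ s t a b} : TmTy Δ s a → TmTy Δ t b → TmTy Δ (.tpair s t) (.prod a b)
  | var {Δ n τ} : Δ[n]? = some τ → TmTy Δ (.var n) τ

def cnt (α : ℕ) : PTy → ℕ
  | .unit => 0
  | .sum a b => max (cnt α a) (cnt α b)
  | .prod a b => cnt α a + cnt α b
  | .var n => if n = α then 1 else 0

def cntEnv (α : ℕ) (Δ : List PTy) : ℕ := (Δ.map (cnt α)).sum

def enum : PTy → List Val
  | .unit => [.sole]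
  | .sum a b => (enum a).map .vleft ++ (enum b).map .vright
  | .prod a b => (enum a).flatMap (fun v => (enum b).map (.vpair v))
  | .var _ => []

inductive Goal : Type
  | conj : Goal → Goal → Goal
  | disj : Goal → Goal → Goal
  | fresh : PTy → Goal → Goal
  | eq : Term → Term → Goal
  | neq : Term → Term → Goal

def denG (K : Type*) [CommSemiring K] : Goal → List Val → K
  | .conj g₁ g₂, δ => denG K g₁ δ * denG K g₂ δ
  | .disj g₁ g₂, δ => denG K g₁ δ + denG K g₂ δ
  | .fresh τ g, δ => ((enum τ).map (fun v => denG K g (v :: δ))).sum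
  | .eq v₁ v₂, δ => if denT v₁ δ = denT v₂ δ then 1 else 0
  | .neq v₁ v₂, δ => if denT v₁ δ = denT v₂ δ then 0 else 1

lemma sum01 {K : Type*} [CommSemiring K] (hid : ∀ a : K, a + a = a)
    (l : List K) (h : ∀ x ∈ l, x = 0 ∨ x = 1) : l.sum = 0 ∨ l.sum = 1 := by
  induction l with
  | nil => left; simp
  | cons a t ih =>
    rcases h a (by simp) with ha | ha <;>
    rcases ih (fun x hx => h x (by simp [hx])) with ht | ht <;>
    simp [List.sum_cons, ha, ht, hid 1]

/-- If addition is idempotent, every goal built from conj, disj, fresh, ==, =/=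
(no factor, no relation calls) has weight 0 or 1 under any environment. -/
theorem stmt_11 {K : Type*} [CommSemiring K] (hid : ∀ a : K, a + a = a)
    (g : Goal) (δ : List Val) :
    denG K g δ = 0 ∨ denG K g δ = 1 := by
  induction g generalizing δ with
  | conj g₁ g₂ ih₁ ih₂ =>
    rcases ih₁ δ with h | h <;> rcases ih₂ δ with h' | h' <;> simp [denG, h, h']
  | disj g₁ g₂ ih₁ ih₂ =>
    rcases ih₁ δ with h | h <;> rcases ih₂ δ with h' | h' <;> simp [denG, h, h', hid 1]
  | fresh τ g ih =>
    exact sum01 hid _ (by simpa using fun v _ => ih (v :: δ))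
  | eq s t => unfold denG; split <;> simp
  | neq s t => unfold denG; split <;> simp
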